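/- arXiv:1909.12020 — 8 statements merged into one kernel-verified Lean document; each statement's English description precedes it below -/
import Mathlib

section
/- Let 0 < a < 1. There exists a constant C > 0 (depending only on a) such that for every α ∈ (0,1) and every λ ∈ (0,a], one has √λ · g_α(λ) ≤ C/√α, where g_α(λ) = 1/(λ + (1 − λ^{√α})²). -/
/-- For `α > 0` and `λ ∈ (0,1)`, the generator function
`g_α(λ) = 1/(λ + (1 − λ^{√α})²)` where `λ^{√α} = exp(√α · log λ)`. -/
noncomputable def genFun (α lam : ℝ) : ℝ :=
  1 / (lam + (1 - Real.exp (Real.sqrt α * Real.log lam)) ^ 2)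

/-!
Put `s = √λ` and `x = √α · (-log λ)`, so that `g_α(λ) = 1 / (s² + (1 - e^{-x})²)`.
Since `1 - e^{-x} ≥ x / (1 + x) ≥ min x 1 / 2`, AM-GM gives `s² + (1 - e^{-x})² ≥ s · min x 1`.
For `λ ≤ a` and `√α ≤ 1` we have `min x 1 ≥ √α · min (-log a) 1`, whence
`√λ · g_α(λ) ≤ (min (-log a) 1)⁻¹ / √α`.
-/

open Real

lemma min_one_div_two_le_one_sub_exp_neg {x : ℝ} (hx : 0 ≤ x) :
    min x 1 / 2 ≤ 1 - exp (-x) := by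
  have hexp : exp (-x) ≤ 1 / (1 + x) := by
    rw [exp_neg, one_div]
    exact inv_anti₀ (by linarith) (by linarith [add_one_le_exp x])
  have hfrac : min x 1 / 2 ≤ 1 - 1 / (1 + x) := by
    rw [one_sub_div (by linarith), add_sub_cancel_left, le_div_iff₀ (by linarith)]
    rcases le_total x 1 with h | h
    · rw [min_eq_left h]; nlinarith
    · rw [min_eq_right h]; linarith
  linarith

lemma sqrt_mul_min_mul_genFun_le_one (α : ℝ) {lam : ℝ} (hl0 : 0 < lam) (hl1 : lam ≤ 1) :
    √lam * min (√α * -log lam) 1 * genFun α lam ≤ 1 := by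
  have hx : 0 ≤ √α * -log lam :=
    mul_nonneg (sqrt_nonneg α) (neg_nonneg.mpr (log_nonpos hl0.le hl1))
  have hgap : min (√α * -log lam) 1 / 2 ≤ 1 - exp (√α * log lam) := by
    simpa only [mul_neg, neg_neg] using min_one_div_two_le_one_sub_exp_neg hx
  set m := min (√α * -log lam) 1
  have hm : 0 ≤ m := le_min hx zero_le_one
  have hD : √lam * m ≤ lam + (1 - exp (√α * log lam)) ^ 2 := by
    have hsq : (m / 2) ^ 2 ≤ (1 - exp (√α * log lam)) ^ 2 :=
      pow_le_pow_left₀ (div_nonneg hm zero_le_two) hgap 2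
    nlinarith [sq_nonneg (√lam - m / 2), sq_sqrt hl0.le]
  rw [genFun, mul_one_div, div_le_one (by positivity)]
  exact hD

lemma mul_min_one_le_min_mul_one {t L₀ L : ℝ} (ht0 : 0 ≤ t) (ht1 : t ≤ 1) (hL : L₀ ≤ L) :
    t * min L₀ 1 ≤ min (t * L) 1 :=
  le_min ((mul_le_mul_of_nonneg_left (min_le_left _ _) ht0).trans
      (mul_le_mul_of_nonneg_left hL ht0))
    ((mul_le_mul_of_nonneg_left (min_le_right _ _) ht0).trans (by linarith))

/-- Let `0 < a < 1`. There exists a constant `C > 0` (depending only on `a`) such that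
for every `α ∈ (0,1)` and every `λ ∈ (0,a]`, one has `√λ · g_α(λ) ≤ C/√α`. -/
theorem stmt0 (a : ℝ) (ha0 : 0 < a) (ha1 : a < 1) :
    ∃ C > (0 : ℝ), ∀ α ∈ Set.Ioo (0 : ℝ) 1, ∀ lam ∈ Set.Ioc (0 : ℝ) a,
      Real.sqrt lam * genFun α lam ≤ C / Real.sqrt α := by
  have hm0 : 0 < min (-log a) 1 := lt_min (neg_pos.mpr (log_neg ha0 ha1)) one_pos
  refine ⟨(min (-log a) 1)⁻¹, inv_pos.mpr hm0, ?_⟩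
  rintro α ⟨hα0, hα1⟩ lam ⟨hl0, hla⟩
  have ht0 : 0 < √α := sqrt_pos.mpr hα0
  have hmin : √α * min (-log a) 1 ≤ min (√α * -log lam) 1 :=
    mul_min_one_le_min_mul_one ht0.le (sqrt_le_one.mpr hα1.le)
      (neg_le_neg (log_le_log hl0 hla))
  have hg : 0 ≤ √lam * genFun α lam :=
    mul_nonneg (sqrt_nonneg _) (one_div_nonneg.mpr (by positivity))
  have hbound := sqrt_mul_min_mul_genFun_le_one α hl0 (by linarith)
  rw [inv_div_left, ← one_div, le_div_iff₀ (mul_pos ht0 hm0)]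
  nlinarith
end

section
/- Let 0 < a < 1 and set M = (ln(1/a)/(1 + ln(1/a)))². Then for every α ∈ (0,1) and every λ ∈ (0,a], one has (1 − λ^{√α})² ≥ M·α; consequently g_α(λ) ≤ 1/(λ + M·α) for all λ ∈ (0,a] and α ∈ (0,1). -/
/-!
With `t = √α ∈ (0,1]` and `L = log(1/a) ≥ 0`, one has `λ^t ≤ a^t = e^{-tL} ≤ 1/(1 + tL)`, so
`1 − λ^t ≥ tL/(1 + tL) ≥ t · L/(1 + L)` by concavity of `x ↦ x/(1 + x)`. Squaring gives
`(1 − λ^t)² ≥ t² (L/(1 + L))² = M α`, and the bound on `g_α` follows by monotonicity of `1/x`.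
-/

open Real

lemma div_one_add_le_one_sub_exp_neg {x : ℝ} (hx : 0 ≤ x) : x / (1 + x) ≤ 1 - exp (-x) := by
  have hexp : exp (-x) ≤ 1 / (1 + x) := by
    rw [exp_neg, inv_eq_one_div]
    exact one_div_le_one_div_of_le (by positivity) (by linarith [add_one_le_exp x])
  have hsplit : x / (1 + x) = 1 - 1 / (1 + x) := by field_simp; ring
  linarith

lemma mul_div_one_add_le_mul_div_one_add_mul {x t : ℝ} (hx : 0 ≤ x) (ht0 : 0 ≤ t)
    (ht1 : t ≤ 1) : t * (x / (1 + x)) ≤ t * x / (1 + t * x) := by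
  rw [← mul_div_assoc]
  exact div_le_div_of_nonneg_left (by positivity) (by positivity) (by nlinarith)

lemma mul_log_inv_div_le_one_sub_exp_mul_log {a lam t : ℝ} (ha0 : 0 < a) (ha1 : a ≤ 1)
    (hlam : 0 < lam) (hla : lam ≤ a) (ht0 : 0 ≤ t) (ht1 : t ≤ 1) :
    t * (log (1 / a) / (1 + log (1 / a))) ≤ 1 - exp (t * log lam) := by
  set L := log (1 / a) with hL
  have hLa : L = -log a := by rw [hL, one_div, log_inv]
  have hL0 : 0 ≤ L := by rw [hLa]; linarith [log_nonpos ha0.le ha1]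
  have hpow : exp (t * log lam) ≤ exp (-(t * L)) := by
    rw [exp_le_exp, hLa, mul_neg, neg_neg]
    exact mul_le_mul_of_nonneg_left (log_le_log hlam hla) ht0
  calc t * (L / (1 + L)) ≤ t * L / (1 + t * L) :=
        mul_div_one_add_le_mul_div_one_add_mul hL0 ht0 ht1
    _ ≤ 1 - exp (-(t * L)) := div_one_add_le_one_sub_exp_neg (by positivity)
    _ ≤ 1 - exp (t * log lam) := by linarith

/-- Let `0 < a < 1` and set `M = (log(1/a)/(1 + log(1/a)))²`. Then for every `α ∈ (0,1)`
and every `λ ∈ (0,a]`, one has `(1 − λ^{√α})² ≥ M·α`; consequently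
`g_α(λ) ≤ 1/(λ + M·α)`. -/
theorem stmt1 (a : ℝ) (ha0 : 0 < a) (ha1 : a < 1)
    (M : ℝ) (hM : M = (Real.log (1 / a) / (1 + Real.log (1 / a))) ^ 2) :
    ∀ α ∈ Set.Ioo (0 : ℝ) 1, ∀ lam ∈ Set.Ioc (0 : ℝ) a,
      (1 - Real.exp (Real.sqrt α * Real.log lam)) ^ 2 ≥ M * α ∧
      genFun α lam ≤ 1 / (lam + M * α) := by
  rintro α ⟨hα0, hα1⟩ lam ⟨hlam, hla⟩
  have hL0 : 0 ≤ log (1 / a) := log_nonneg (by rw [le_div_iff₀ ha0]; linarith)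
  have hbound := mul_log_inv_div_le_one_sub_exp_mul_log ha0 ha1.le hlam hla
    (sqrt_nonneg α) (sqrt_le_one.mpr hα1.le)
  have hMα : M * α = (sqrt α * (log (1 / a) / (1 + log (1 / a)))) ^ 2 := by
    rw [hM, mul_pow, sq_sqrt hα0.le, mul_comm]
  have hsq : (1 - exp (sqrt α * log lam)) ^ 2 ≥ M * α := by
    rw [hMα]
    exact pow_le_pow_left₀ (by positivity) hbound 2
  refine ⟨hsq, one_div_le_one_div_of_le ?_ (by linarith)⟩
  have hM0 : 0 ≤ M := by rw [hM]; positivity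
  positivity
end

section
/- For all real numbers α and λ with 0 < α ≤ λ < 1, one has r_α(λ) ≤ (9/4) · α(ln λ)² / (λ + α(ln λ)²), where r_α(λ) = (1 − λ^{√α})²/(λ + (1 − λ^{√α})²). -/
/-- For `α > 0` and `λ ∈ (0,1)`, the residual function
`r_α(λ) = (1 − λ^{√α})²/(λ + (1 − λ^{√α})²)` where `λ^{√α} = exp(√α · log λ)`. -/
noncomputable def resFun (α lam : ℝ) : ℝ :=
  (1 - Real.exp (Real.sqrt α * Real.log lam)) ^ 2 /
    (lam + (1 - Real.exp (Real.sqrt α * Real.log lam)) ^ 2)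

/-- For all real numbers `α` and `λ` with `0 < α ≤ λ < 1`, one has
`r_α(λ) ≤ (9/4) · α(log λ)² / (λ + α(log λ)²)`. -/
theorem stmt2 (α lam : ℝ) (hα : 0 < α) (hαlam : α ≤ lam) (hlam : lam < 1) :
    resFun α lam ≤ (9 / 4) * (α * (Real.log lam) ^ 2 / (lam + α * (Real.log lam) ^ 2)) := by
  have hlam0 : 0 < lam := lt_of_lt_of_le hα hαlam
  set t : ℝ := Real.sqrt α * Real.log lam with ht
  set u : ℝ := (1 - Real.exp t) ^ 2 with hu
  have hv : α * (Real.log lam) ^ 2 = t ^ 2 := by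
    rw [ht, mul_pow, Real.sq_sqrt hα.le]
  have hexp1 : Real.exp t ≤ 1 := by
    have : t ≤ 0 := mul_nonpos_of_nonneg_of_nonpos (Real.sqrt_nonneg α)
      (Real.log_nonpos hlam0.le hlam.le)
    simpa using Real.exp_le_exp.mpr (le_trans this le_rfl) |>.trans_eq Real.exp_zero
  have huv : u ≤ t ^ 2 := by
    have h1 : 1 - Real.exp t ≤ -t := by
      have := Real.add_one_le_exp t
      linarith
    have h2 : 0 ≤ 1 - Real.exp t := by linarith
    calc u = (1 - Real.exp t) ^ 2 := rfl
      _ ≤ (-t) ^ 2 := by exact pow_le_pow_left₀ h2 h1 2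
      _ = t ^ 2 := by ring
  have hu0 : 0 ≤ u := sq_nonneg _
  have hden1 : 0 < lam + u := by linarith
  have hden2 : 0 < lam + t ^ 2 := by positivity
  have step1 : u / (lam + u) ≤ t ^ 2 / (lam + t ^ 2) := by
    rw [div_le_div_iff₀ hden1 hden2]
    nlinarith
  have step2 : t ^ 2 / (lam + t ^ 2) ≤ (9 / 4) * (t ^ 2 / (lam + t ^ 2)) := by
    have : 0 ≤ t ^ 2 / (lam + t ^ 2) := by positivity
    linarith
  rw [resFun, hv]
  exact le_trans step1 step2
end

section
/- For all real numbers α and λ with 0 < α ≤ λ < 1, one has (1 − λ^{√α})² ≥ (4/9) · α(ln λ)². -/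
/-- For all real numbers `α` and `λ` with `0 < α ≤ lam < 1`, one has
`(1 − λ^{√α})² ≥ (4/9) · α(log λ)²`, where `λ^{√α} = exp(√α · log λ)`. -/
theorem stmt3 (α lam : ℝ) (hα : 0 < α) (hαlam : α ≤ lam) (hlam : lam < 1) :
    (1 - Real.exp (Real.sqrt α * Real.log lam)) ^ 2 ≥ (4 / 9) * (α * (Real.log lam) ^ 2) := by
  have hlam0 : 0 < lam := lt_of_lt_of_le hα hαlam
  have hlog : Real.log lam < 0 := Real.log_neg hlam0 hlam
  set L : ℝ := -Real.log lam with hL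
  have hL0 : 0 < L := by simp [hL]; linarith
  set x : ℝ := Real.sqrt α * L with hx
  have hsα : 0 < Real.sqrt α := Real.sqrt_pos.mpr hα
  have hx0 : 0 < x := mul_pos hsα hL0
  -- bound: x ≤ √lam * L ≤ 2 * exp (-1) ≤ 0.7358
  have ht0 : 0 < Real.sqrt lam := Real.sqrt_pos.mpr hlam0
  have hxle : x ≤ Real.sqrt lam * L :=
    mul_le_mul_of_nonneg_right (Real.sqrt_le_sqrt hαlam) hL0.le
  have hkey : Real.sqrt lam * L ≤ 2 * Real.exp (-1) := by
    have hlogt : Real.log (Real.sqrt lam) = Real.log lam / 2 := Real.log_sqrt hlam0.le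
    set t : ℝ := Real.sqrt lam with hts
    have hinv : 0 < 1 / (Real.exp 1 * t) := by positivity
    have h1 : Real.log (1 / (Real.exp 1 * t)) ≤ 1 / (Real.exp 1 * t) - 1 :=
      Real.log_le_sub_one_of_pos hinv
    have h2 : Real.log (1 / (Real.exp 1 * t)) = -(1 + Real.log t) := by
      rw [Real.log_div one_ne_zero (by positivity), Real.log_mul (Real.exp_ne_zero 1) ht0.ne',
        Real.log_exp, Real.log_one]
      ring
    have h3 : -Real.log t ≤ 1 / (Real.exp 1 * t) := by linarith [h1, h2.symm ▸ h1]
    -- multiply by t > 0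
    have h4 : t * (-Real.log t) ≤ 1 / Real.exp 1 := by
      have h := mul_le_mul_of_nonneg_left h3 ht0.le
      have he : (0:ℝ) < Real.exp 1 := Real.exp_pos 1
      have : t * (1 / (Real.exp 1 * t)) = 1 / Real.exp 1 := by
        field_simp
      linarith [this ▸ h]
    have hLt : L = 2 * (-Real.log t) := by
      rw [hL, hts, hlogt]; ring
    rw [hLt, Real.exp_neg]
    calc t * (2 * (-Real.log t)) = 2 * (t * (-Real.log t)) := by ring
      _ ≤ 2 * (1 / Real.exp 1) := by linarith
      _ = 2 * (Real.exp 1)⁻¹ := by rw [one_div]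
  have hexp1 : (2.7182818283 : ℝ) < Real.exp 1 := Real.exp_one_gt_d9
  have hbound : x ≤ 0.7358 := by
    have he : (0:ℝ) < Real.exp 1 := Real.exp_pos 1
    have h5 : 2 * Real.exp (-1) ≤ 0.7358 := by
      rw [Real.exp_neg, show (2:ℝ) * (Real.exp 1)⁻¹ = 2 / Real.exp 1 by
        rw [div_eq_mul_inv], div_le_iff₀ he]
      nlinarith
    linarith [hxle.trans hkey]
  -- cubic lower bound on exp x
  have hcubic : 1 + x + x ^ 2 / 2 + x ^ 3 / 6 ≤ Real.exp x := by
    have h := Real.sum_le_exp_of_nonneg hx0.le 4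
    norm_num [Finset.sum_range_succ, Nat.factorial] at h
    nlinarith [h]
  have hC : 0 < 1 + x + x ^ 2 / 2 + x ^ 3 / 6 := by positivity
  have hA : Real.exp (-x) * (1 + x + x ^ 2 / 2 + x ^ 3 / 6) ≤ 1 := by
    have h := mul_le_mul_of_nonneg_left hcubic (Real.exp_pos (-x)).le
    have h1 : Real.exp (-x) * Real.exp x = 1 := by
      rw [← Real.exp_add]; simp
    linarith
  have hB : (1:ℝ) ≤ (1 - 2 / 3 * x) * (1 + x + x ^ 2 / 2 + x ^ 3 / 6) := by
    nlinarith [mul_nonneg hx0.le (sub_nonneg.mpr hbound),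
      mul_nonneg (mul_nonneg hx0.le hx0.le) (sub_nonneg.mpr hbound),
      mul_nonneg (mul_nonneg (mul_nonneg hx0.le hx0.le) hx0.le) (sub_nonneg.mpr hbound)]
  have hmain : Real.exp (-x) ≤ 1 - 2 / 3 * x := by
    nlinarith [hA, hB, hC]
  have harg : Real.sqrt α * Real.log lam = -x := by rw [hx, hL]; ring
  rw [harg]
  have h7 : (1 - Real.exp (-x)) ^ 2 ≥ (2 / 3 * x) ^ 2 := by
    nlinarith [Real.exp_pos (-x), hmain, hx0]
  have hxsq : x ^ 2 = α * L ^ 2 := by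
    rw [hx, mul_pow, Real.sq_sqrt hα.le]
  have hLsq : L ^ 2 = (Real.log lam) ^ 2 := by rw [hL]; ring
  calc (1 - Real.exp (-x)) ^ 2 ≥ (2 / 3 * x) ^ 2 := h7
    _ = 4 / 9 * x ^ 2 := by ring
    _ = 4 / 9 * (α * (Real.log lam) ^ 2) := by rw [hxsq, hLsq]
end

section
/- Let 0 < p ≤ 2 and a ∈ (0,1). For α > 0 define h(λ) = α p (ln λ)² − λ(2 − p − ln λ) for λ ∈ (0,a]. Then there exist constants c₁, c₂ > 0 (depending only on p and a) and ᾱ ∈ (0,1) such that for every α ∈ (0,ᾱ]: (i) there exists at least one λ ∈ (0,a] with h(λ) = 0, and (ii) every λ ∈ (0,a] with h(λ) = 0 satisfies c₁ · α·|ln α| ≤ λ ≤ c₂ · α·|ln α|. -/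
/-!
Write `L = -log λ` and `T = -log α`. At a root, `α p L² = λ (2 - p + L)`; since
`L ≥ -log a > 0`, the ratio `L / (2 - p + L)` lies between `-log a / (2 - log a)` and `1`, so
`λ` is comparable to `α L`. Taking logarithms of these two bounds gives `L = T + O(log T)`,
hence `T / 2 ≤ L ≤ 2 T` for small `α`, which turns `α L` into `α T = α |log α|`.
A root exists because `h(a) < 0` for small `α` while `h → +∞` at `0⁺`.
-/

/-- For parameters `p > 0` and `α > 0`, the function
`h(λ) = α p (log λ)² − λ(2 − p + |log λ|)`; for `λ ∈ (0,1)` we have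
`|log λ| = −log λ`, so `h(λ) = α p (log λ)² − λ(2 − p − log λ)`. -/
noncomputable def hFun (p α lam : ℝ) : ℝ :=
  α * p * (Real.log lam) ^ 2 - lam * (2 - p - Real.log lam)

open Real Set Filter Topology

lemma bounds_of_hFun_eq_zero {p a α lam : ℝ} (hp0 : 0 < p) (hp2 : p ≤ 2) (hα : 0 ≤ α)
    (hlam : 0 < lam) (hlama : lam ≤ a) (ha1 : a < 1) (hroot : hFun p α lam = 0) :
    p * -log a / (2 + -log a) * (α * -log lam) ≤ lam ∧ lam ≤ p * (α * -log lam) := by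
  set L := -log lam
  set L₀ := -log a
  have hL₀ : 0 < L₀ := neg_pos.2 (log_neg (hlam.trans_le hlama) ha1)
  have hLL₀ : L₀ ≤ L := neg_le_neg (log_le_log hlam hlama)
  have hL : 0 < L := hL₀.trans_le hLL₀
  have heq : α * p * L ^ 2 = lam * (2 - p + L) := by
    unfold hFun at hroot; simp only [L]; linear_combination hroot
  constructor
  · rw [div_mul_eq_mul_div, div_le_iff₀ (by linarith)]
    have hsq_le : α * p * L ^ 2 ≤ lam * (2 + L) := by nlinarith
    have hratio : α * p * L * (L₀ * (2 + L)) ≤ α * p * L * (L * (2 + L₀)) :=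
      mul_le_mul_of_nonneg_left (by nlinarith) (by positivity)
    refine le_of_mul_le_mul_right (a := 2 + L) ?_ (by linarith)
    nlinarith
  · refine le_of_mul_le_mul_right (a := L) ?_ hL
    nlinarith

lemma bounds_mul_neg_log_of_bounds {c C L₀ α lam : ℝ} (hc : 0 < c) (hL₀ : 0 < L₀)
    (hα : 0 < α) (hlam : 0 < lam) (hL : L₀ ≤ -log lam)
    (hlow : c * (α * -log lam) ≤ lam) (hup : lam ≤ C * (α * -log lam))
    (hK : -log (c * L₀) ≤ -log α) (hlogT : log (2 * C) + log (-log α) ≤ -log α / 2) :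
    c / 2 * (α * -log α) ≤ lam ∧ lam ≤ 2 * C * (α * -log α) := by
  set L := -log lam
  set T := -log α
  have hL0 : 0 < L := hL₀.trans_le hL
  have hL_le : L ≤ 2 * T := by
    have hlow₀ : c * L₀ * α ≤ lam := by nlinarith
    have h := log_le_log (by positivity) hlow₀
    rw [log_mul (by positivity) hα.ne'] at h
    linarith
  have hT : 0 < T := by linarith
  have hC : 0 < C := pos_of_mul_pos_left (hlam.trans_le hup) (by positivity)
  have hupper : lam ≤ 2 * C * (α * T) := hup.trans (by nlinarith)
  have hT_le : T / 2 ≤ L := by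
    have h := log_le_log hlam hupper
    rw [log_mul (by positivity) (by positivity), log_mul hα.ne' hT.ne'] at h
    linarith
  exact ⟨by nlinarith, hupper⟩

lemma eventually_add_log_le_half (B : ℝ) : ∀ᶠ T in atTop, B + log T ≤ T / 2 := by
  filter_upwards [isLittleO_log_id_atTop.bound (by norm_num : (0 : ℝ) < 1 / 4),
    eventually_ge_atTop 0, eventually_ge_atTop (4 * B)] with T hlog hT0 hTB
  rw [norm_eq_abs, norm_eq_abs, id, abs_of_nonneg hT0] at hlog
  linarith [le_abs_self (log T)]

lemma eventually_hFun_neg (p a : ℝ) (hp2 : p ≤ 2) (ha0 : 0 < a) (ha1 : a < 1) :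
    ∀ᶠ α in 𝓝 0, hFun p α a < 0 := by
  have hcont : Continuous fun α => hFun p α a := by unfold hFun; fun_prop
  refine hcont.tendsto 0 |>.eventually_lt_const ?_
  have := log_neg ha0 ha1
  simp only [hFun]; nlinarith

lemma tendsto_hFun_nhdsGT_zero {p α : ℝ} (hp0 : 0 < p) (hα : 0 < α) :
    Tendsto (hFun p α) (𝓝[>] 0) atTop := by
  have hsq : Tendsto (fun x => α * p * log x ^ 2) (𝓝[>] 0) atTop :=
    (tendsto_log_nhdsGT_zero.atBot_mul_atBot₀ tendsto_log_nhdsGT_zero).const_mul_atTop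
      (mul_pos hα hp0) |>.congr fun x => by ring
  have hlin : Tendsto (fun x => x * (2 - p - log x)) (𝓝[>] 0) (𝓝 0) := by
    have h := (tendsto_log_mul_rpow_nhdsGT_zero (r := 1) one_pos).neg.add
      ((tendsto_id.mul_const (2 - p)).mono_left nhdsWithin_le_nhds)
    simp only [rpow_one, id, zero_mul, neg_zero, add_zero] at h
    exact h.congr fun x => by ring
  exact hsq.atTop_add hlin.neg |>.congr fun x => by simp [hFun, sub_eq_add_neg]

lemma exists_hFun_eq_zero {p a α : ℝ} (hp0 : 0 < p) (ha0 : 0 < a) (hα : 0 < α)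
    (ha : hFun p α a < 0) : ∃ lam ∈ Ioc 0 a, hFun p α lam = 0 := by
  obtain ⟨lam₀, hpos, hlam₀⟩ := ((tendsto_hFun_nhdsGT_zero hp0 hα).eventually_gt_atTop 0).and
    (Ioo_mem_nhdsGT ha0) |>.exists
  have hcont : ContinuousOn (hFun p α) (Icc lam₀ a) := by
    have hne : ∀ x ∈ Icc lam₀ a, x ≠ 0 := fun x hx => (hlam₀.1.trans_le hx.1).ne'
    unfold hFun
    fun_prop (disch := assumption)
  obtain ⟨lam, hlam, hroot⟩ := intermediate_value_Icc' hlam₀.2.le hcont ⟨ha.le, hpos.le⟩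
  exact ⟨lam, ⟨hlam₀.1.trans_le hlam.1, hlam.2⟩, hroot⟩

/-- Let `0 < p ≤ 2` and `a ∈ (0,1)`. Then there exist constants `c₁, c₂ > 0`
(depending only on `p` and `a`) and `ᾱ ∈ (0,1)` such that for every `α ∈ (0,ᾱ]`:
(i) there exists at least one `λ ∈ (0,a]` with `h(λ) = 0`, and
(ii) every `λ ∈ (0,a]` with `h(λ) = 0` satisfies `c₁·α·|log α| ≤ λ ≤ c₂·α·|log α|`. -/
theorem stmt5 (p a : ℝ) (hp0 : 0 < p) (hp2 : p ≤ 2) (ha0 : 0 < a) (ha1 : a < 1) :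
    ∃ c₁ > (0 : ℝ), ∃ c₂ > (0 : ℝ), ∃ αbar ∈ Set.Ioo (0 : ℝ) 1,
      ∀ α ∈ Set.Ioc (0 : ℝ) αbar,
        (∃ lam ∈ Set.Ioc (0 : ℝ) a, hFun p α lam = 0) ∧
        (∀ lam ∈ Set.Ioc (0 : ℝ) a, hFun p α lam = 0 →
          c₁ * (α * |Real.log α|) ≤ lam ∧ lam ≤ c₂ * (α * |Real.log α|)) := by
  have hL₀ : 0 < -log a := neg_pos.2 (log_neg ha0 ha1)
  set c := p * -log a / (2 + -log a)
  have hc : 0 < c := by positivity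
  have hnegLog : Tendsto (fun α => -log α) (𝓝[>] 0) atTop :=
    tendsto_neg_atBot_atTop.comp tendsto_log_nhdsGT_zero
  have hev : ∀ᶠ α in 𝓝[>] 0, α < 1 ∧ hFun p α a < 0 ∧ -log (c * -log a) ≤ -log α ∧
      log (2 * p) + log (-log α) ≤ -log α / 2 :=
    ((eventually_lt_nhds one_pos).filter_mono nhdsWithin_le_nhds).and <|
      ((eventually_hFun_neg p a hp2 ha0 ha1).filter_mono nhdsWithin_le_nhds).and <|
      hnegLog.eventually ((eventually_ge_atTop _).and (eventually_add_log_le_half _))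
  obtain ⟨αbar, hαbar, hsub⟩ := mem_nhdsGT_iff_exists_Ioc_subset.1 hev
  refine ⟨c / 2, by positivity, 2 * p, by positivity, αbar, ⟨hαbar, (hsub ⟨hαbar, le_rfl⟩).1⟩,
    fun α hα => ?_⟩
  obtain ⟨hα1, hhFun, hK, hlogT⟩ := hsub hα
  rw [abs_of_neg (log_neg hα.1 hα1)]
  refine ⟨exists_hFun_eq_zero hp0 ha0 hα.1 hhFun, fun lam hlam hroot => ?_⟩
  obtain ⟨hlow, hup⟩ := bounds_of_hFun_eq_zero hp0 hp2 hα.1.le hlam.1 hlam.2 ha1 hroot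
  exact bounds_mul_neg_log_of_bounds hc hL₀ hα.1 hlam.1
    (neg_le_neg (log_le_log hlam.1 hlam.2)) hlow hup hK hlogT
end

section
/- Let p > 0 and 0 < a < 1. There exist a constant C > 0 and ᾱ ∈ (0,1) such that for every α ∈ (0,ᾱ], sup_{0<λ≤a} r_α(λ)·(−ln λ)^{−p} ≤ C · (−ln α)^{−p}, i.e., the new regularization method has qualification f_p. -/
lemma resFun_nonneg (α lam : ℝ) (hl : 0 < lam) : 0 ≤ resFun α lam := by
  unfold resFun
  positivity

lemma resFun_le_one (α lam : ℝ) (hl : 0 < lam) : resFun α lam ≤ 1 := by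
  unfold resFun
  apply div_le_one_of_le₀
  · nlinarith [sq_nonneg (1 - Real.exp (Real.sqrt α * Real.log lam))]
  · positivity

lemma resFun_le (α lam : ℝ) (hα : 0 < α) (hl0 : 0 < lam) (hl1 : lam < 1) :
    resFun α lam ≤ α * (Real.log lam) ^ 2 / lam := by
  have hlog : Real.log lam < 0 := Real.log_neg hl0 hl1
  set x := Real.sqrt α * Real.log lam with hx
  have hx0 : x ≤ 0 := mul_nonpos_of_nonneg_of_nonpos (Real.sqrt_nonneg α) hlog.le
  have h1 : 0 ≤ 1 - Real.exp x := by
    have := Real.exp_le_one_iff.mpr hx0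
    linarith
  have h2 : 1 - Real.exp x ≤ -x := by
    have := Real.add_one_le_exp x
    linarith
  have hnum : (1 - Real.exp x) ^ 2 ≤ α * (Real.log lam) ^ 2 := by
    have h3 : (1 - Real.exp x) ^ 2 ≤ (-x) ^ 2 := by nlinarith
    have h4 : (-x) ^ 2 = α * (Real.log lam) ^ 2 := by
      rw [hx]; rw [neg_pow, mul_pow]
      rw [Real.sq_sqrt hα.le]; ring
    linarith
  unfold resFun
  rw [← hx]
  calc (1 - Real.exp x) ^ 2 / (lam + (1 - Real.exp x) ^ 2)
      ≤ (1 - Real.exp x) ^ 2 / lam := by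
        apply div_le_div_of_nonneg_left (by positivity) hl0
        nlinarith [sq_nonneg (1 - Real.exp x)]
    _ ≤ α * (Real.log lam) ^ 2 / lam := by gcongr

/-- Main theorem. -/
theorem stmt7 (p a : ℝ) (hp : 0 < p) (ha0 : 0 < a) (ha1 : a < 1) :
    ∃ C > (0 : ℝ), ∃ αbar ∈ Set.Ioo (0 : ℝ) 1,
      ∀ α ∈ Set.Ioc (0 : ℝ) αbar, ∀ lam ∈ Set.Ioc (0 : ℝ) a,
        resFun α lam * (-Real.log lam) ^ (-p) ≤ C * (-Real.log α) ^ (-p) := by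
  obtain ⟨n, hn⟩ : ∃ n : ℕ, p + 2 ≤ (n:ℝ) := ⟨⌈p⌉₊ + 2, by push_cast; linarith [Nat.le_ceil p]⟩
  set t0 : ℝ := -Real.log a with ht0def
  have ht0 : 0 < t0 := by
    have := Real.log_neg ha0 ha1
    simp only [ht0def]; linarith
  refine ⟨2 ^ p + t0 ^ (-p) * ((Nat.factorial n : ℝ) * 2 ^ n), by positivity,
    Real.exp (-1), ⟨Real.exp_pos _, by simpa using Real.exp_lt_one_iff.mpr (by norm_num : (-1:ℝ) < 0)⟩, ?_⟩
  rintro α ⟨hα0, hα1⟩ lam ⟨hl0, hla⟩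
  have hlam1 : lam < 1 := hla.trans_lt ha1
  set s : ℝ := -Real.log α with hsdef
  set t : ℝ := -Real.log lam with htdef
  have hs1 : 1 ≤ s := by
    have := Real.log_le_log hα0 hα1
    rw [Real.log_exp] at this
    simp only [hsdef]; linarith
  have hspos : 0 < s := by linarith
  have hstep : t0 ≤ t := by
    have := Real.log_le_log hl0 hla
    simp only [htdef, ht0def]; linarith
  have htpos : 0 < t := lt_of_lt_of_le ht0 hstep
  have hsnp : (0:ℝ) ≤ s ^ (-p) := Real.rpow_nonneg hspos.le _
  by_cases hcase : s / 2 ≤ t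
  · -- Case A: t large, use resFun ≤ 1
    have h1 : resFun α lam * t ^ (-p) ≤ t ^ (-p) := by
      apply mul_le_of_le_one_left (Real.rpow_nonneg htpos.le _) (resFun_le_one _ _ hl0)
    have h2 : t ^ (-p) ≤ (s / 2) ^ (-p) :=
      Real.rpow_le_rpow_of_nonpos (by linarith) hcase (by linarith)
    have h3 : (s / 2) ^ (-p) = 2 ^ p * s ^ (-p) := by
      rw [div_eq_mul_inv, Real.mul_rpow hspos.le (by norm_num), Real.inv_rpow (by norm_num : (0:ℝ) ≤ 2),
        ← Real.rpow_neg (by norm_num : (0:ℝ) ≤ 2), neg_neg]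
      ring
    have h4 : 2 ^ p * s ^ (-p) ≤ (2 ^ p + t0 ^ (-p) * ((Nat.factorial n : ℝ) * 2 ^ n)) * s ^ (-p) := by
      apply mul_le_mul_of_nonneg_right _ hsnp
      have : (0:ℝ) ≤ t0 ^ (-p) * ((Nat.factorial n : ℝ) * 2 ^ n) := by positivity
      linarith
    calc resFun α lam * t ^ (-p) ≤ t ^ (-p) := h1
      _ ≤ (s/2) ^ (-p) := h2
      _ = 2 ^ p * s ^ (-p) := h3
      _ ≤ _ := h4
  · -- Case B: t < s/2
    push_neg at hcase
    have hres : resFun α lam ≤ t ^ 2 * Real.exp (-(s/2)) := by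
      have h1 := resFun_le α lam hα0 hl0 hlam1
      have hlameq : lam = Real.exp (-t) := by
        rw [htdef, neg_neg, Real.exp_log hl0]
      have hαle : α ≤ Real.exp (-s) := by
        rw [hsdef, neg_neg, Real.exp_log hα0]
      have h2 : α * (Real.log lam) ^ 2 / lam ≤ t ^ 2 * Real.exp (-(s/2)) := by
        have hlog2 : (Real.log lam) ^ 2 = t ^ 2 := by rw [htdef]; ring
        have hlaminv : lam⁻¹ = Real.exp t := by rw [hlameq, ← Real.exp_neg, neg_neg]
        rw [div_eq_mul_inv, hlog2, hlaminv]
        have hmul : α * t ^ 2 * Real.exp t ≤ Real.exp (-s) * t ^ 2 * Real.exp t :=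
          mul_le_mul_of_nonneg_right
            (mul_le_mul_of_nonneg_right hαle (sq_nonneg t)) (Real.exp_pos t).le
        calc α * t ^ 2 * Real.exp t ≤ Real.exp (-s) * t ^ 2 * Real.exp t := hmul
          _ = t ^ 2 * (Real.exp (-s) * Real.exp t) := by ring
          _ = t ^ 2 * Real.exp (t - s) := by rw [← Real.exp_add]; ring_nf
          _ ≤ t ^ 2 * Real.exp (-(s/2)) := by
              apply mul_le_mul_of_nonneg_left _ (sq_nonneg t)
              exact Real.exp_le_exp.mpr (by linarith)
      linarith
    have hfac : s ^ n ≤ (Nat.factorial n : ℝ) * 2 ^ n * Real.exp (s/2) := by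
      have := Real.pow_div_factorial_le_exp (s/2) (by linarith : (0:ℝ) ≤ s/2) n
      have hfn : (0:ℝ) < (Nat.factorial n : ℝ) := by positivity
      have h5 : (s/2) ^ n ≤ (Nat.factorial n : ℝ) * Real.exp (s/2) := by
        rw [div_le_iff₀ hfn] at this; linarith [this]
      have h6 : (s/2) ^ n = s ^ n / 2 ^ n := div_pow s 2 n
      rw [h6] at h5
      rw [div_le_iff₀ (by positivity : (0:ℝ) < 2 ^ n)] at h5
      linarith [h5]
    -- key: t^2 * exp(-(s/2)) * t^(-p) ≤ t0^(-p) * (n! * 2^n) * s^(-p)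
    have htp : t ^ (-p) ≤ t0 ^ (-p) :=
      Real.rpow_le_rpow_of_nonpos ht0 hstep (by linarith)
    have ht2 : t ^ 2 ≤ s ^ 2 := by nlinarith
    have hkey : s ^ 2 * Real.exp (-(s/2)) ≤ (Nat.factorial n : ℝ) * 2 ^ n * s ^ (-p) := by
      have hsn : s ^ (2:ℝ) * s ^ p ≤ s ^ (n:ℝ) := by
        rw [← Real.rpow_add hspos]
        exact Real.rpow_le_rpow_of_exponent_le hs1 (by linarith)
      have h7 : s ^ ((2:ℝ)) = s ^ (2:ℕ) := by
        rw [← Real.rpow_natCast s 2]; norm_num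
      have h8 : s ^ ((n:ℝ)) = s ^ n := Real.rpow_natCast s n
      rw [h7, h8] at hsn
      have hsppos : 0 < s ^ p := Real.rpow_pos_of_pos hspos p
      have hmain : s ^ 2 * s ^ p ≤ (Nat.factorial n : ℝ) * 2 ^ n * Real.exp (s/2) := hsn.trans hfac
      rw [Real.exp_neg, Real.rpow_neg hspos.le, ← div_eq_mul_inv, ← div_eq_mul_inv,
        div_le_div_iff₀ (Real.exp_pos _) hsppos]
      exact hmain
    have hb0 : (0:ℝ) ≤ t ^ 2 * Real.exp (-(s/2)) := by positivity
    have ht0p : (0:ℝ) ≤ t0 ^ (-p) := Real.rpow_nonneg ht0.le _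
    calc resFun α lam * t ^ (-p)
        ≤ (t ^ 2 * Real.exp (-(s/2))) * t0 ^ (-p) :=
          mul_le_mul hres htp (Real.rpow_nonneg htpos.le _) hb0
      _ ≤ (s ^ 2 * Real.exp (-(s/2))) * t0 ^ (-p) :=
          mul_le_mul_of_nonneg_right
            (mul_le_mul_of_nonneg_right ht2 (Real.exp_pos _).le) ht0p
      _ ≤ ((Nat.factorial n : ℝ) * 2 ^ n * s ^ (-p)) * t0 ^ (-p) :=
          mul_le_mul_of_nonneg_right hkey ht0p
      _ = (t0 ^ (-p) * ((Nat.factorial n : ℝ) * 2 ^ n)) * s ^ (-p) := by ring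
      _ ≤ (2 ^ p + t0 ^ (-p) * ((Nat.factorial n : ℝ) * 2 ^ n)) * s ^ (-p) := by
          apply mul_le_mul_of_nonneg_right _ hsnp
          have : (0:ℝ) < (2:ℝ) ^ p := Real.rpow_pos_of_pos (by norm_num) p
          linarith
end

section
/- Let 0 < a ≤ e^{−1} and let φ : (0,a] → (0,∞) be continuous, monotonically increasing, concave and such that φ(λ) → 0 as λ → 0⁺. For every ε > 0 there exists a constant C_ε > 0 such that for all α, λ with 0 < α < λ ≤ a and α < 1, one has r_α(λ)·φ(λ) ≤ C_ε · α^{−ε} · φ(α). -/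
set_option maxHeartbeats 1000000 in
/-- Let `0 < a ≤ e⁻¹` and let `φ : (0,a] → (0,∞)` be continuous, monotonically
increasing, concave and such that `φ(λ) → 0` as `λ → 0⁺`. For every `ε > 0` there is
a constant `C_ε > 0` such that for all `α, λ` with `0 < α < λ ≤ a` and `α < 1`,
one has `r_α(λ)·φ(λ) ≤ C_ε · α^{−ε} · φ(α)`. -/
theorem stmt13 (a : ℝ) (ha0 : 0 < a) (ha1 : a ≤ Real.exp (-1))
    (phi : ℝ → ℝ)
    (hcont : ContinuousOn phi (Set.Ioc 0 a))
    (hmono : MonotoneOn phi (Set.Ioc 0 a))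
    (hconc : ConcaveOn ℝ (Set.Ioc 0 a) phi)
    (hpos : ∀ lam ∈ Set.Ioc (0 : ℝ) a, 0 < phi lam)
    (hlim : Filter.Tendsto phi (nhdsWithin 0 (Set.Ioi 0)) (nhds 0)) :
    ∀ ε > (0 : ℝ), ∃ C > (0 : ℝ), ∀ α lam : ℝ, 0 < α → α < lam → lam ≤ a → α < 1 →
      resFun α lam * phi lam ≤ C * α ^ (-ε) * phi α := by
  intro ε hε
  refine ⟨8 / ε ^ 2, by positivity, ?_⟩
  intro α lam hα hαl hla hα1
  have hlam0 : 0 < lam := hα.trans hαl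
  have hlne : lam ≠ 0 := ne_of_gt hlam0
  have hαne : α ≠ 0 := ne_of_gt hα
  have hlmem : lam ∈ Set.Ioc (0:ℝ) a := ⟨hlam0, hla⟩
  have hαa : α ≤ a := le_of_lt (hαl.trans_le hla)
  have hμmem : α/2 ∈ Set.Ioc (0:ℝ) a := ⟨by linarith, by linarith⟩
  have hφl := hpos lam hlmem
  have hφα := hpos α ⟨hα, hαa⟩
  have hφμ := hpos _ hμmem
  -- log bounds
  have hLa : Real.log lam ≤ -1 := by
    have := Real.log_le_log hlam0 (hla.trans ha1)
    simpa [Real.log_exp] using this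
  have hLα : Real.log α ≤ Real.log lam := Real.log_le_log hα hαl.le
  -- the numerator N and its bound
  have hy0 : Real.sqrt α * Real.log lam ≤ 0 :=
    mul_nonpos_of_nonneg_of_nonpos (Real.sqrt_nonneg α) (by linarith)
  have hexp : Real.exp (Real.sqrt α * Real.log lam) ≤ 1 := Real.exp_le_one_iff.mpr hy0
  have h1e : 1 - Real.exp (Real.sqrt α * Real.log lam) ≤ -(Real.sqrt α * Real.log lam) := by
    have := Real.add_one_le_exp (Real.sqrt α * Real.log lam)
    linarith
  set N := (1 - Real.exp (Real.sqrt α * Real.log lam)) ^ 2 with hNdef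
  have hN0 : 0 ≤ N := sq_nonneg _
  have hNle : N ≤ α * Real.log lam ^ 2 := by
    have h0 : 0 ≤ 1 - Real.exp (Real.sqrt α * Real.log lam) := by linarith
    have hsq : N ≤ (-(Real.sqrt α * Real.log lam)) ^ 2 := by rw [hNdef]; nlinarith
    have hαsq : Real.sqrt α ^ 2 = α := Real.sq_sqrt hα.le
    nlinarith
  -- resFun bound : resFun α lam ≤ N / lam
  have hres : resFun α lam ≤ N / lam := by
    rw [resFun, ← hNdef]
    gcongr
    · linarith
  have hres0 : 0 ≤ resFun α lam := by
    rw [resFun, ← hNdef]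
    positivity
  clear_value N
  -- concavity : phi lam ≤ 2*lam/α * phi α
  have hφbound : phi lam ≤ 2 * lam / α * phi α := by
    have hden : (0:ℝ) < lam - α/2 := by linarith
    have hdne : lam - α/2 ≠ 0 := ne_of_gt hden
    have ht0 : 0 ≤ (α/2) / (lam - α/2) := by positivity
    have ht1 : (α/2) / (lam - α/2) ≤ 1 := by rw [div_le_one hden]; linarith
    have hkey := hconc.2 hlmem hμmem
      (show (0:ℝ) ≤ (α/2)/(lam-α/2) from ht0)
      (show (0:ℝ) ≤ 1 - (α/2)/(lam-α/2) by linarith) (by ring)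
    have hcomb : (α/2)/(lam-α/2) * lam + (1 - (α/2)/(lam-α/2)) * (α/2) = α := by
      have h := div_mul_cancel₀ (α/2) hdne
      nlinarith [h]
    rw [smul_eq_mul, smul_eq_mul, smul_eq_mul, smul_eq_mul, hcomb] at hkey
    have htlb : α / (2*lam) ≤ (α/2)/(lam-α/2) := by
      rw [div_le_div_iff₀ (by positivity) hden]
      nlinarith
    have h2 : α / (2*lam) * phi lam ≤ phi α := by
      nlinarith [mul_le_mul_of_nonneg_right htlb hφl.le]
    rw [div_mul_eq_mul_div, div_le_iff₀ (by positivity : (0:ℝ) < 2*lam)] at h2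
    rw [div_mul_eq_mul_div, le_div_iff₀ hα]
    nlinarith
  -- the rpow bound : (log α)^2 ≤ 4/ε^2 * α^(-ε)
  have hrpow : (Real.log α) ^ 2 ≤ 4 / ε ^ 2 * α ^ (-ε) := by
    set x := -Real.log α with hx
    clear_value x
    have hx1 : 1 ≤ x := by
      have h : Real.log α ≤ -1 := hLα.trans hLa
      rw [hx]; linarith
    have hαε : α ^ (-ε) = Real.exp (ε * x) := by
      rw [Real.rpow_def_of_pos hα, hx]
      ring_nf
    have hhalf : ε * x / 2 ≤ Real.exp (ε * x / 2) := by
      have := Real.add_one_le_exp (ε * x / 2)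
      linarith
    have hsqe : Real.exp (ε * x / 2) * Real.exp (ε * x / 2) = Real.exp (ε * x) := by
      rw [← Real.exp_add]; ring_nf
    have hεx0 : 0 ≤ ε * x := by positivity
    have hq : (ε * x / 2) * (ε * x / 2) ≤ Real.exp (ε * x) := by
      calc (ε * x / 2) * (ε * x / 2)
          ≤ Real.exp (ε * x / 2) * Real.exp (ε * x / 2) :=
            mul_le_mul hhalf hhalf (by positivity) (Real.exp_pos _).le
        _ = Real.exp (ε * x) := hsqe
    have hsq2 : (ε * x) ^ 2 ≤ 4 * Real.exp (ε * x) := by nlinarith [hq]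
    have hxsq : x ^ 2 ≤ 4 / ε ^ 2 * Real.exp (ε * x) := by
      rw [div_mul_eq_mul_div, le_div_iff₀ (by positivity : (0:ℝ) < ε ^ 2)]
      nlinarith
    have hlog : (Real.log α) ^ 2 = x ^ 2 := by rw [hx]; ring
    rw [hlog, hαε]
    exact hxsq
  have hrp0 : 0 < α ^ (-ε) := Real.rpow_pos_of_pos hα (-ε)
  -- combine everything
  have hL2 : Real.log lam ^ 2 ≤ (Real.log α) ^ 2 := by nlinarith
  calc resFun α lam * phi lam
      ≤ (N / lam) * (2 * lam / α * phi α) :=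
        mul_le_mul hres hφbound hφl.le (by positivity)
    _ = (2 / α * phi α) * N := by field_simp
    _ ≤ (2 / α * phi α) * (α * Real.log lam ^ 2) :=
        mul_le_mul_of_nonneg_left hNle (by positivity)
    _ = 2 * Real.log lam ^ 2 * phi α := by field_simp
    _ ≤ 2 * (Real.log α) ^ 2 * phi α := by nlinarith
    _ ≤ 2 * (4 / ε ^ 2 * α ^ (-ε)) * phi α := by nlinarith
    _ = 8 / ε ^ 2 * α ^ (-ε) * phi α := by ring
end

section
/- Let 0 < a < 1, let φ : (0,a] → (0,∞) be a continuous, strictly increasing index function with φ(λ) → 0 as λ → 0⁺, let Θ(λ) = √λ·φ(λ) and, for ε ∈ (0,1/2), Θ_ε(λ) = λ^{1/2−ε}·φ(λ). Fix δ ∈ (0, Θ(a)] and let α_* ∈ (0,a] satisfy Θ(α_*) = δ, and for each ε ∈ (0,1/2) let α_ε ∈ (0,a] satisfy Θ_ε(α_ε) = δ. Then α_ε → α_* as ε → 0⁺, and consequently α_ε^{−ε}·φ(α_ε) → φ(α_*) = φ(Θ^{−1}(δ)) as ε → 0⁺. -/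
open Filter Topology Set

/-! For `q ≥ 0` the map `λ ↦ λ^q φ(λ)` is strictly increasing, and on `(0, 1]` lowering `q`
raises it. Hence `Θ(α_ε) ≤ Θ_ε(α_ε) = δ = Θ(α_*)` forces `α_ε ≤ α_*`. Conversely, for `c < α_*`,
`Θ_ε(c) = c^{-ε} Θ(c) → Θ(c) < δ`, so eventually `Θ_ε(c) < Θ_ε(α_ε)` and thus `c < α_ε`.
The second limit follows from `α_ε^{-ε} φ(α_ε) = δ / √α_ε`. -/

variable {phi : ℝ → ℝ} {a p δ αstar : ℝ} {α : ℝ → ℝ}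

lemma strictMonoOn_rpow_mul {s : Set ℝ} (hs : s ⊆ Ioi 0) (hmono : StrictMonoOn phi s)
    (hpos : ∀ x ∈ s, 0 < phi x) (hp : 0 ≤ p) :
    StrictMonoOn (fun x => x ^ p * phi x) s := fun x hx _ hy hxy =>
  mul_lt_mul' (Real.rpow_le_rpow (hs hx).le hxy.le hp) (hmono hx hy hxy) (hpos x hx).le
    (Real.rpow_pos_of_pos (hs hy) p)

lemma rpow_neg_mul_eq_div {x y ε : ℝ} (hx : 0 < x) (h : x ^ (p - ε) * y = δ) :
    x ^ (-ε) * y = δ / x ^ p := by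
  rw [← h, sub_eq_add_neg, Real.rpow_add hx]
  field_simp

lemma le_of_rpow_sub_mul_eq (ha : a ≤ 1) (hmono : StrictMonoOn phi (Ioc 0 a))
    (hpos : ∀ x ∈ Ioc 0 a, 0 < phi x) {ε x y : ℝ} (hp : 0 ≤ p) (hε : 0 ≤ ε)
    (hx : x ∈ Ioc 0 a) (hy : y ∈ Ioc 0 a) (h : x ^ (p - ε) * phi x = y ^ p * phi y) :
    x ≤ y := by
  refine ((strictMonoOn_rpow_mul (fun _ h => h.1) hmono hpos hp).le_iff_le hx hy).1 ?_
  calc x ^ p * phi x ≤ x ^ (p - ε) * phi x :=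
        mul_le_mul_of_nonneg_right
          (Real.rpow_le_rpow_of_exponent_ge hx.1 (hx.2.trans ha) (by linarith)) (hpos x hx).le
    _ = y ^ p * phi y := h

lemma eventually_lt_of_rpow_sub_mul_eq (hmono : StrictMonoOn phi (Ioc 0 a))
    (hpos : ∀ x ∈ Ioc 0 a, 0 < phi x) (hp : 0 < p)
    (hα : ∀ ε ∈ Ioo 0 p, α ε ∈ Ioc 0 a ∧ α ε ^ (p - ε) * phi (α ε) = δ)
    {c : ℝ} (hc : c ∈ Ioc 0 a) (hcδ : c ^ p * phi c < δ) :
    ∀ᶠ ε in 𝓝[>] 0, c < α ε := by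
  have hlim : Tendsto (fun ε => c ^ (p - ε) * phi c) (𝓝 0) (𝓝 (c ^ p * phi c)) :=
    ((continuous_const.rpow (continuous_const.sub continuous_id)
      fun _ => Or.inl hc.1.ne').mul continuous_const).tendsto' 0 _ (by simp)
  filter_upwards [(hlim.mono_left nhdsWithin_le_nhds).eventually_lt_const hcδ,
    Ioo_mem_nhdsGT hp] with ε hlt hε
  obtain ⟨hαmem, hαeq⟩ := hα ε hε
  by_contra! hle
  have hΘle : α ε ^ (p - ε) * phi (α ε) ≤ c ^ (p - ε) * phi c :=
    (strictMonoOn_rpow_mul (fun _ h => h.1) hmono hpos (sub_nonneg.2 hε.2.le)).monotoneOn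
      hαmem hc hle
  linarith

theorem tendsto_of_rpow_sub_mul_eq (ha : a ≤ 1) (hmono : StrictMonoOn phi (Ioc 0 a))
    (hpos : ∀ x ∈ Ioc 0 a, 0 < phi x) (hp : 0 < p)
    (hα : ∀ ε ∈ Ioo 0 p, α ε ∈ Ioc 0 a ∧ α ε ^ (p - ε) * phi (α ε) = δ)
    (hstar : αstar ∈ Ioc 0 a) (hΘ : αstar ^ p * phi αstar = δ) :
    Tendsto α (𝓝[>] 0) (𝓝 αstar) := by
  have hsmall : Ioo 0 p ∈ 𝓝[>] (0 : ℝ) := Ioo_mem_nhdsGT hp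
  refine tendsto_order.2 ⟨fun c hc => ?_, fun c hc => ?_⟩
  · rcases le_or_gt c 0 with hc0 | hc0
    · filter_upwards [hsmall] with ε hε using hc0.trans_lt (hα ε hε).1.1
    · have hcmem : c ∈ Ioc 0 a := ⟨hc0, hc.le.trans hstar.2⟩
      refine eventually_lt_of_rpow_sub_mul_eq hmono hpos hp hα hcmem ?_
      exact hΘ ▸ strictMonoOn_rpow_mul (fun _ h => h.1) hmono hpos hp.le hcmem hstar hc
  · filter_upwards [hsmall] with ε hε
    obtain ⟨hαmem, hαeq⟩ := hα ε hε
    exact (le_of_rpow_sub_mul_eq ha hmono hpos hp.le hε.1.le hαmem hstar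
      (hαeq.trans hΘ.symm)).trans_lt hc

theorem tendsto_rpow_neg_mul_of_rpow_sub_mul_eq (ha : a ≤ 1)
    (hmono : StrictMonoOn phi (Ioc 0 a)) (hpos : ∀ x ∈ Ioc 0 a, 0 < phi x) (hp : 0 < p)
    (hα : ∀ ε ∈ Ioo 0 p, α ε ∈ Ioc 0 a ∧ α ε ^ (p - ε) * phi (α ε) = δ)
    (hstar : αstar ∈ Ioc 0 a) (hΘ : αstar ^ p * phi αstar = δ) :
    Tendsto (fun ε => α ε ^ (-ε) * phi (α ε)) (𝓝[>] 0) (𝓝 (phi αstar)) := by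
  have hαlim := tendsto_of_rpow_sub_mul_eq ha hmono hpos hp hα hstar hΘ
  have hstar_pow : αstar ^ p ≠ 0 := (Real.rpow_pos_of_pos hstar.1 p).ne'
  have hdiv : Tendsto (fun ε => δ / α ε ^ p) (𝓝[>] 0) (𝓝 (δ / αstar ^ p)) :=
    tendsto_const_nhds.div
      ((Real.continuousAt_rpow_const _ _ (Or.inr hp.le)).tendsto.comp hαlim) hstar_pow
  have hval : δ / αstar ^ p = phi αstar := by rw [← hΘ, mul_div_cancel_left₀ _ hstar_pow]
  rw [hval] at hdiv
  refine hdiv.congr' ?_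
  filter_upwards [Ioo_mem_nhdsGT hp] with ε hε
  exact (rpow_neg_mul_eq_div (hα ε hε).1.1 (hα ε hε).2).symm

theorem stmt15_general (a : ℝ) (ha1 : a < 1)
    (phi : ℝ → ℝ)
    (hmono : StrictMonoOn phi (Set.Ioc 0 a))
    (hpos : ∀ lam ∈ Set.Ioc (0 : ℝ) a, 0 < phi lam)
    (δ : ℝ)
    (αstar : ℝ) (hαstar : αstar ∈ Set.Ioc (0 : ℝ) a)
    (hΘstar : Real.sqrt αstar * phi αstar = δ)
    (αe : ℝ → ℝ)
    (hαe : ∀ ε ∈ Set.Ioo (0 : ℝ) (1 / 2), αe ε ∈ Set.Ioc (0 : ℝ) a ∧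
      (αe ε) ^ ((1 : ℝ) / 2 - ε) * phi (αe ε) = δ) :
    Tendsto αe (nhdsWithin 0 (Set.Ioi 0)) (nhds αstar) ∧
    Tendsto (fun ε => (αe ε) ^ (-ε) * phi (αe ε)) (nhdsWithin 0 (Set.Ioi 0))
      (nhds (phi αstar)) := by
  rw [Real.sqrt_eq_rpow] at hΘstar
  have hhalf : (0 : ℝ) < 1 / 2 := by norm_num
  exact ⟨tendsto_of_rpow_sub_mul_eq ha1.le hmono hpos hhalf hαe hαstar hΘstar,
    tendsto_rpow_neg_mul_of_rpow_sub_mul_eq ha1.le hmono hpos hhalf hαe hαstar hΘstar⟩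

/-- Let `0 < a < 1`, let `φ : (0,a] → (0,∞)` be a continuous, strictly increasing
index function with `φ(λ) → 0` as `λ → 0⁺`, let `Θ(λ) = √λ·φ(λ)` and, for
`ε ∈ (0,1/2)`, `Θ_ε(λ) = λ^{1/2−ε}·φ(λ)`. Fix `δ ∈ (0, Θ(a)]`, let `α_* ∈ (0,a]`
satisfy `Θ(α_*) = δ`, and for each `ε ∈ (0,1/2)` let `α_ε ∈ (0,a]` satisfy
`Θ_ε(α_ε) = δ`. Then `α_ε → α_*` as `ε → 0⁺`, and consequently
`α_ε^{−ε}·φ(α_ε) → φ(α_*) = φ(Θ⁻¹(δ))` as `ε → 0⁺`. -/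
theorem stmt15 (a : ℝ) (ha0 : 0 < a) (ha1 : a < 1)
    (phi : ℝ → ℝ)
    (hcont : ContinuousOn phi (Set.Ioc 0 a))
    (hmono : StrictMonoOn phi (Set.Ioc 0 a))
    (hpos : ∀ lam ∈ Set.Ioc (0 : ℝ) a, 0 < phi lam)
    (hlim : Tendsto phi (nhdsWithin 0 (Set.Ioi 0)) (nhds 0))
    (δ : ℝ) (hδ0 : 0 < δ) (hδa : δ ≤ Real.sqrt a * phi a)
    (αstar : ℝ) (hαstar : αstar ∈ Set.Ioc (0 : ℝ) a)
    (hΘstar : Real.sqrt αstar * phi αstar = δ)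
    (αe : ℝ → ℝ)
    (hαe : ∀ ε ∈ Set.Ioo (0 : ℝ) (1 / 2), αe ε ∈ Set.Ioc (0 : ℝ) a ∧
      (αe ε) ^ ((1 : ℝ) / 2 - ε) * phi (αe ε) = δ) :
    Tendsto αe (nhdsWithin 0 (Set.Ioi 0)) (nhds αstar) ∧
    Tendsto (fun ε => (αe ε) ^ (-ε) * phi (αe ε)) (nhdsWithin 0 (Set.Ioi 0))
      (nhds (phi αstar)) :=
  stmt15_general a ha1 phi hmono hpos δ αstar hαstar hΘstar αe hαe
end
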